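/- arXiv:2110.06653 — 2 statements merged into one kernel-verified Lean document; each statement's English description precedes it below -/
import Mathlib

section
/- Let (Θ̂, Γ̂) be a local minimizer of Q₁(λ₁, λ₂, ·, ·). Then there exists a local minimizer Ω̂ = (Ω̂^(1), …, Ω̂^(K)) of Q₃(2(λ₁λ₂)^{1/2}, ·) such that Ω̂_jl^(k) = θ̂_jl Γ̂_jl^(k) for all 1 ≤ j, l ≤ p and 1 ≤ k ≤ K. -/
/-!
Replacing `θ_jl, Γ_jl` by `c θ_jl, Γ_jl / c` for one pair `j ≠ l` leaves every `Ω^(k)`, hence the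
likelihood, unchanged, so stationarity of `Q₁` in `c` at a local minimizer gives the balance
`λ₁ θ̂_jl = λ₂ Σ_k ‖Γ̂_jl^(k)‖_F`. Conversely every `Ω` factors as
`θ_jl = (λ₂/λ₁ · Σ_k ‖Ω_jl^(k)‖_F)^{1/2}`, `Γ_jl = Ω_jl / θ_jl`, and for this balanced factorization
the two penalties of `Q₁` add up (equality in AM–GM) to the penalty of `Q₃` with `λ = 2 √(λ₁λ₂)`.
By the balance, the factorization of `Ω̂ = Θ̂ ∘ Γ̂` returns `(Θ̂, Γ̂)`; since it depends continuously
on `Ω`, `Q₃(Ω) = Q₁(θ(Ω), Γ(Ω)) ≥ Q₁(Θ̂, Γ̂) = Q₃(Ω̂)` for `Ω` near `Ω̂`.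
-/

open scoped BigOperators
open Matrix

noncomputable section

namespace JF

/-- Frobenius norm of a real matrix. -/
def frobG {α β : Type*} [Fintype α] [Fintype β] (B : Matrix α β ℝ) : ℝ :=
  Real.sqrt (∑ a, ∑ b, B a b ^ 2)

/-- The `(j,l)` block (an `M × M` matrix) of a `pM × pM` matrix. -/
def blk {p M : ℕ} (A : Matrix (Fin p × Fin M) (Fin p × Fin M) ℝ) (j l : Fin p) :
    Matrix (Fin M) (Fin M) ℝ := fun a b => A (j, a) (l, b)

/-- `M`-block version of the ℓ∞ matrix norm: `max_j Σ_l ‖A_{jl}‖_F`. -/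
def blockInfty {p M : ℕ} (A : Matrix (Fin p × Fin M) (Fin p × Fin M) ℝ) : ℝ :=
  ⨆ j, ∑ l, frobG (blk A j l)

/-- `M`-block version of the max (elementwise ℓ∞) norm: `max_{j,l} ‖A_{jl}‖_F`. -/
def blockMax {p M : ℕ} (A : Matrix (Fin p × Fin M) (Fin p × Fin M) ℝ) : ℝ :=
  ⨆ j, ⨆ l, frobG (blk A j l)

/-- `M`-block version of the ℓ₁ matrix norm: `max_l Σ_j ‖A_{jl}‖_F`. -/
def blockOne {p M : ℕ} (A : Matrix (Fin p × Fin M) (Fin p × Fin M) ℝ) : ℝ :=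
  ⨆ l, ∑ j, frobG (blk A j l)

/-- Generalized block ℓ∞ norm, with block-rows/columns indexed by an arbitrary
finite type `ι` and blocks of shape `α × α`. -/
def bInftyG {ι α : Type*} [Fintype ι] [Fintype α] (A : Matrix (ι × α) (ι × α) ℝ) : ℝ :=
  ⨆ j, ∑ l, frobG (fun a b => A (j, a) (l, b))

/-- Entrywise ℓ₁ norm of a matrix. -/
def ell1 {α β : Type*} [Fintype α] [Fintype β] (A : Matrix α β ℝ) : ℝ :=
  ∑ i, ∑ j, |A i j|

/-- `j`-th block of a vector in `ℝ^{pM}`. -/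
def vblk {p M : ℕ} (u : Fin p × Fin M → ℝ) (j : Fin p) : Fin M → ℝ := fun a => u (j, a)

/-- Euclidean norm of a vector. -/
def vnorm2 {M : ℕ} (v : Fin M → ℝ) : ℝ := Real.sqrt (∑ a, v a ^ 2)

/-- Block max norm of a vector in `ℝ^{pM}`: `max_j ‖u_j‖_2`. -/
def vBlockMax {p M : ℕ} (u : Fin p × Fin M → ℝ) : ℝ := ⨆ j, vnorm2 (vblk u j)

/-- `j`-th block of a `pM × M` vertically stacked block matrix. -/
def sblk {p M : ℕ} (x : Matrix (Fin p × Fin M) (Fin M) ℝ) (j : Fin p) :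
    Matrix (Fin M) (Fin M) ℝ := fun a b => x (j, a) b

/-- `max_j ‖x_j‖_F` for a `pM × M` stacked block matrix. -/
def stackMax {p M : ℕ} (x : Matrix (Fin p × Fin M) (Fin M) ℝ) : ℝ :=
  ⨆ j, frobG (sblk x j)

/-- `Σ_j ‖x_j‖_F` for a `pM × M` stacked block matrix. -/
def stackOne {p M : ℕ} (x : Matrix (Fin p × Fin M) (Fin M) ℝ) : ℝ :=
  ∑ j, frobG (sblk x j)

/-- The block matrix `Ω` with blocks `Ω_{jl} = θ_{jl} Γ_{jl}`. -/
def mkOmega {p M : ℕ} (Θ : Matrix (Fin p) (Fin p) ℝ)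
    (G : Matrix (Fin p × Fin M) (Fin p × Fin M) ℝ) :
    Matrix (Fin p × Fin M) (Fin p × Fin M) ℝ :=
  fun x y => Θ x.1 y.1 * G x y

/-- Feasible parameters `(Θ, Γ)` for the joint functional graphical model:
`Θ` symmetric with nonnegative off-diagonal and positive diagonal entries,
each `Γ^{(k)}` block-symmetric (`Γ_{lj} = Γ_{jl}ᵀ`), and every
`Ω^{(k)} = (θ_{jl} Γ^{(k)}_{jl})` symmetric positive definite. -/
def Feasible {p M K : ℕ} (Θ : Matrix (Fin p) (Fin p) ℝ)
    (Γ : Fin K → Matrix (Fin p × Fin M) (Fin p × Fin M) ℝ) : Prop :=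
  Θ.IsSymm ∧ (∀ j l : Fin p, j ≠ l → 0 ≤ Θ j l) ∧ (∀ j : Fin p, 0 < Θ j j) ∧
    (∀ (k : Fin K) (j l : Fin p), blk (Γ k) l j = (blk (Γ k) j l)ᵀ) ∧
    (∀ k : Fin K, (mkOmega Θ (Γ k)).PosDef)

/-- The negative log-likelihood part `Σ_k [tr(Σ̂^{(k)} Ω^{(k)}) − log det Ω^{(k)}]`. -/
def loss {p M K : ℕ}
    (Sig Ω : Fin K → Matrix (Fin p × Fin M) (Fin p × Fin M) ℝ) : ℝ :=
  ∑ k, (Matrix.trace (Sig k * Ω k) - Real.log (Ω k).det)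

/-- `Σ_{j≠l} θ_{jl}`. -/
def pen1 {p : ℕ} (Θ : Matrix (Fin p) (Fin p) ℝ) : ℝ :=
  ∑ q ∈ (Finset.univ : Finset (Fin p)).offDiag, Θ q.1 q.2

/-- `Σ_{j≠l} Σ_k ‖Γ^{(k)}_{jl}‖_F`. -/
def pen2 {p M K : ℕ} (Γ : Fin K → Matrix (Fin p × Fin M) (Fin p × Fin M) ℝ) : ℝ :=
  ∑ q ∈ (Finset.univ : Finset (Fin p)).offDiag, ∑ k, frobG (blk (Γ k) q.1 q.2)

/-- The objective `Q₁(λ₁, λ₂, Θ, Γ)`. -/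
def Q1 {p M K : ℕ} (Sig : Fin K → Matrix (Fin p × Fin M) (Fin p × Fin M) ℝ)
    (l1 l2 : ℝ) (Θ : Matrix (Fin p) (Fin p) ℝ)
    (Γ : Fin K → Matrix (Fin p × Fin M) (Fin p × Fin M) ℝ) : ℝ :=
  loss Sig (fun k => mkOmega Θ (Γ k)) + l1 * pen1 Θ + l2 * pen2 Γ

/-- The objective `Q₂(λ, Θ, Γ)`. -/
def Q2 {p M K : ℕ} (Sig : Fin K → Matrix (Fin p × Fin M) (Fin p × Fin M) ℝ)
    (lam : ℝ) (Θ : Matrix (Fin p) (Fin p) ℝ)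
    (Γ : Fin K → Matrix (Fin p × Fin M) (Fin p × Fin M) ℝ) : ℝ :=
  loss Sig (fun k => mkOmega Θ (Γ k)) + pen1 Θ + lam * pen2 Γ

/-- The objective `Q₃(λ, Ω)`. -/
def Q3 {p M K : ℕ} (Sig : Fin K → Matrix (Fin p × Fin M) (Fin p × Fin M) ℝ)
    (lam : ℝ) (Ω : Fin K → Matrix (Fin p × Fin M) (Fin p × Fin M) ℝ) : ℝ :=
  loss Sig Ω + lam * ∑ q ∈ (Finset.univ : Finset (Fin p)).offDiag,
    Real.sqrt (∑ k, frobG (blk (Ω k) q.1 q.2))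

/-- The ℓ₁ distance `‖Θ − Θ'‖₁ + Σ_k ‖Γ^{(k)} − Γ'^{(k)}‖₁` between parameter pairs. -/
def paramDist {p M K : ℕ} (Θ Θ' : Matrix (Fin p) (Fin p) ℝ)
    (Γ Γ' : Fin K → Matrix (Fin p × Fin M) (Fin p × Fin M) ℝ) : ℝ :=
  ell1 (Θ - Θ') + ∑ k, ell1 (Γ k - Γ' k)

/-- `(Θ̂, Γ̂)` is a local minimizer of `Q₁(λ₁, λ₂, ·, ·)` (parameters restricted to
`θ_{jj} = 1`). -/
def IsLocalMinQ1 {p M K : ℕ}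
    (Sig : Fin K → Matrix (Fin p × Fin M) (Fin p × Fin M) ℝ)
    (l1 l2 : ℝ) (Θh : Matrix (Fin p) (Fin p) ℝ)
    (Γh : Fin K → Matrix (Fin p × Fin M) (Fin p × Fin M) ℝ) : Prop :=
  (Feasible Θh Γh ∧ ∀ j, Θh j j = 1) ∧
    ∃ δ > 0, ∀ Θ Γ, Feasible Θ Γ → (∀ j, Θ j j = 1) →
      paramDist Θ Θh Γ Γh < δ → Q1 Sig l1 l2 Θh Γh ≤ Q1 Sig l1 l2 Θ Γ

/-- `(Θ̂, Γ̂)` is a local minimizer of `Q₂(λ, ·, ·)` over the full parameter space. -/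
def IsLocalMinQ2 {p M K : ℕ}
    (Sig : Fin K → Matrix (Fin p × Fin M) (Fin p × Fin M) ℝ)
    (lam : ℝ) (Θh : Matrix (Fin p) (Fin p) ℝ)
    (Γh : Fin K → Matrix (Fin p × Fin M) (Fin p × Fin M) ℝ) : Prop :=
  Feasible Θh Γh ∧
    ∃ δ > 0, ∀ Θ Γ, Feasible Θ Γ →
      paramDist Θ Θh Γ Γh < δ → Q2 Sig lam Θh Γh ≤ Q2 Sig lam Θ Γ

/-- `Ω̂` is a local minimizer of `Q₃(λ, ·)` over `K`-tuples of symmetric positive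
definite matrices. -/
def IsLocalMinQ3 {p M K : ℕ}
    (Sig : Fin K → Matrix (Fin p × Fin M) (Fin p × Fin M) ℝ)
    (lam : ℝ) (Ωh : Fin K → Matrix (Fin p × Fin M) (Fin p × Fin M) ℝ) : Prop :=
  (∀ k, (Ωh k).PosDef) ∧
    ∃ δ > 0, ∀ Ω : Fin K → Matrix (Fin p × Fin M) (Fin p × Fin M) ℝ,
      (∀ k, (Ω k).PosDef) →
      (∑ k, ell1 (Ω k - Ωh k)) < δ → Q3 Sig lam Ωh ≤ Q3 Sig lam Ω

section Norms

variable {α β : Type*} [Fintype α] [Fintype β]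

lemma frobG_nonneg (B : Matrix α β ℝ) : 0 ≤ frobG B := Real.sqrt_nonneg _

lemma abs_le_frobG (B : Matrix α β ℝ) (a : α) (b : β) : |B a b| ≤ frobG B := by
  rw [frobG, ← Real.sqrt_sq_eq_abs]
  refine Real.sqrt_le_sqrt ?_
  calc B a b ^ 2 ≤ ∑ b', B a b' ^ 2 :=
        Finset.single_le_sum (f := fun b' => B a b' ^ 2) (fun _ _ => sq_nonneg _) (Finset.mem_univ b)
    _ ≤ ∑ a', ∑ b', B a' b' ^ 2 :=
        Finset.single_le_sum (f := fun a' => ∑ b', B a' b' ^ 2)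
          (fun _ _ => Finset.sum_nonneg fun _ _ => sq_nonneg _) (Finset.mem_univ a)

lemma frobG_smul (t : ℝ) (B : Matrix α β ℝ) : frobG (t • B) = |t| * frobG B := by
  simp only [frobG, Matrix.smul_apply, smul_eq_mul, mul_pow, ← Finset.mul_sum]
  rw [Real.sqrt_mul (sq_nonneg t), Real.sqrt_sq_eq_abs]

lemma frobG_transpose (B : Matrix α β ℝ) : frobG Bᵀ = frobG B := by
  simp only [frobG, Matrix.transpose_apply]
  rw [Finset.sum_comm]

@[fun_prop]
lemma continuous_frobG : Continuous fun B : Matrix α β ℝ => frobG B := by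
  unfold frobG
  fun_prop

lemma ell1_nonneg (A : Matrix α β ℝ) : 0 ≤ ell1 A :=
  Finset.sum_nonneg fun _ _ => Finset.sum_nonneg fun _ _ => abs_nonneg _

lemma abs_le_ell1 (A : Matrix α β ℝ) (a : α) (b : β) : |A a b| ≤ ell1 A :=
  (Finset.single_le_sum (f := fun b' => |A a b'|) (fun _ _ => abs_nonneg _) (Finset.mem_univ b)).trans
    (Finset.single_le_sum (f := fun a' => ∑ b', |A a' b'|)
      (fun _ _ => Finset.sum_nonneg fun _ _ => abs_nonneg _) (Finset.mem_univ a))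

lemma ell1_zero : ell1 (0 : Matrix α β ℝ) = 0 := by
  simp [ell1]

@[fun_prop]
lemma continuous_ell1 : Continuous fun A : Matrix α β ℝ => ell1 A := by
  unfold ell1
  fun_prop

end Norms

open Filter Topology in
lemma exists_sum_ell1_lt_of_eventually {ι α β : Type*} [Fintype ι] [Fintype α] [Fintype β]
    {A₀ : ι → Matrix α β ℝ} {P : (ι → Matrix α β ℝ) → Prop} (h : ∀ᶠ A in 𝓝 A₀, P A) :
    ∃ δ > 0, ∀ A, ∑ i, ell1 (A i - A₀ i) < δ → P A := by
  obtain ⟨δ, hδ, hball⟩ := (Metric.eventually_nhds_iff (α := ι → α → β → ℝ)).1 h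
  refine ⟨δ, hδ, fun A hA => hball (?_ : @dist (ι → α → β → ℝ) _ A A₀ < δ)⟩
  refine (dist_pi_lt_iff (X := fun _ => α → β → ℝ) hδ).2 fun i => (dist_pi_lt_iff hδ).2 fun a =>
    (dist_pi_lt_iff hδ).2 fun b => ?_
  calc dist (A i a b) (A₀ i a b) = |(A i - A₀ i) a b| := Real.dist_eq _ _
    _ ≤ ell1 (A i - A₀ i) := abs_le_ell1 _ a b
    _ ≤ ∑ i, ell1 (A i - A₀ i) :=
        Finset.single_le_sum (f := fun i => ell1 (A i - A₀ i)) (fun _ _ => ell1_nonneg _)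
          (Finset.mem_univ i)
    _ < δ := hA

section PairWeight

variable {ι : Type*} [DecidableEq ι]

def pairWeight (j l : ι) (c : ℝ) : Matrix ι ι ℝ :=
  fun x y => if s(x, y) = s(j, l) then c else 1

lemma pairWeight_isSymm (j l : ι) (c : ℝ) : (pairWeight j l c).IsSymm := by
  ext x y
  simp only [Matrix.transpose_apply, pairWeight, Sym2.eq_swap]

lemma pairWeight_pos (j l : ι) {c : ℝ} (hc : 0 < c) (x y : ι) : 0 < pairWeight j l c x y := by
  unfold pairWeight
  split <;> positivity

lemma pairWeight_mul_inv (j l : ι) {c : ℝ} (hc : c ≠ 0) (x y : ι) :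
    pairWeight j l c x y * pairWeight j l c⁻¹ x y = 1 := by
  unfold pairWeight
  split
  · exact mul_inv_cancel₀ hc
  · exact one_mul 1

lemma pairWeight_one (j l : ι) (x y : ι) : pairWeight j l 1 x y = 1 := by
  unfold pairWeight
  split <;> rfl

lemma pairWeight_self {j l : ι} (hjl : j ≠ l) (c : ℝ) (x : ι) : pairWeight j l c x x = 1 := by
  have hx : s(x, x) ≠ s(j, l) := by
    rw [Ne, Sym2.eq_iff]
    rintro (⟨rfl, rfl⟩ | ⟨rfl, rfl⟩) <;> exact hjl rfl
  exact if_neg hx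

lemma continuous_pairWeight (j l : ι) : Continuous (pairWeight j l) := by
  refine continuous_pi fun x => continuous_pi fun y => ?_
  unfold pairWeight
  split <;> fun_prop

lemma sum_offDiag_pairWeight_mul [Fintype ι] {j l : ι} (hjl : j ≠ l) (c : ℝ) (f : ι × ι → ℝ) :
    ∑ q ∈ Finset.univ.offDiag, pairWeight j l c q.1 q.2 * f q =
      ∑ q ∈ Finset.univ.offDiag, f q + (c - 1) * (f (j, l) + f (l, j)) := by
  have hpair : Finset.univ.offDiag ∩ {(j, l), (l, j)} = ({(j, l), (l, j)} : Finset (ι × ι)) := by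
    refine Finset.inter_eq_right.2 fun q hq => ?_
    simp only [Finset.mem_insert, Finset.mem_singleton] at hq
    rcases hq with rfl | rfl <;> simp [hjl, hjl.symm]
  have hne : ((j, l) : ι × ι) ≠ (l, j) := fun h => hjl (Prod.ext_iff.1 h).1
  have hsplit : ∀ q : ι × ι, pairWeight j l c q.1 q.2 * f q =
      f q + if q ∈ ({(j, l), (l, j)} : Finset (ι × ι)) then (c - 1) * f q else 0 := by
    rintro ⟨x, y⟩
    simp only [pairWeight, Sym2.eq_iff, Finset.mem_insert, Finset.mem_singleton, Prod.ext_iff]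
    split_ifs <;> ring
  rw [Finset.sum_congr rfl fun q _ => hsplit q, Finset.sum_add_distrib, Finset.sum_ite_mem, hpair,
    Finset.sum_pair hne]
  ring

end PairWeight

section Blocks

variable {p M K : ℕ}

def blockNormSum (Ω : Fin K → Matrix (Fin p × Fin M) (Fin p × Fin M) ℝ) (j l : Fin p) : ℝ :=
  ∑ k, frobG (blk (Ω k) j l)

lemma pen2_eq_sum_blockNormSum (Γ : Fin K → Matrix (Fin p × Fin M) (Fin p × Fin M) ℝ) :
    pen2 Γ = ∑ q ∈ Finset.univ.offDiag, blockNormSum Γ q.1 q.2 :=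
  rfl

lemma blockNormSum_nonneg (Ω : Fin K → Matrix (Fin p × Fin M) (Fin p × Fin M) ℝ) (j l : Fin p) :
    0 ≤ blockNormSum Ω j l :=
  Finset.sum_nonneg fun _ _ => frobG_nonneg _

lemma abs_le_blockNormSum (Ω : Fin K → Matrix (Fin p × Fin M) (Fin p × Fin M) ℝ) (k : Fin K)
    (x y : Fin p × Fin M) : |Ω k x y| ≤ blockNormSum Ω x.1 y.1 :=
  (abs_le_frobG (blk (Ω k) x.1 y.1) x.2 y.2).trans
    (Finset.single_le_sum (f := fun k => frobG (blk (Ω k) x.1 y.1)) (fun _ _ => frobG_nonneg _)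
      (Finset.mem_univ k))

lemma continuous_blockNormSum (j l : Fin p) :
    Continuous fun Ω : Fin K → Matrix (Fin p × Fin M) (Fin p × Fin M) ℝ => blockNormSum Ω j l := by
  unfold blockNormSum blk
  fun_prop

lemma blockNormSum_comm {Ω : Fin K → Matrix (Fin p × Fin M) (Fin p × Fin M) ℝ}
    (hΩ : ∀ k j l, blk (Ω k) l j = (blk (Ω k) j l)ᵀ) (j l : Fin p) :
    blockNormSum Ω l j = blockNormSum Ω j l := by
  unfold blockNormSum
  exact Finset.sum_congr rfl fun k _ => by rw [hΩ, frobG_transpose]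

lemma blk_swap_of_isHermitian {A : Matrix (Fin p × Fin M) (Fin p × Fin M) ℝ} (hA : A.IsHermitian)
    (j l : Fin p) : blk A l j = (blk A j l)ᵀ := by
  ext a b
  exact ((star_trivial _).symm.trans (hA.apply (l, a) (j, b))).symm

lemma continuous_mkOmega_left (G : Matrix (Fin p × Fin M) (Fin p × Fin M) ℝ) :
    Continuous fun Θ : Matrix (Fin p) (Fin p) ℝ => mkOmega Θ G :=
  continuous_matrix fun x y => (continuous_id.matrix_elem x.1 y.1).mul continuous_const

lemma blk_mkOmega (Θ : Matrix (Fin p) (Fin p) ℝ) (G : Matrix (Fin p × Fin M) (Fin p × Fin M) ℝ)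
    (j l : Fin p) : blk (mkOmega Θ G) j l = Θ j l • blk G j l :=
  rfl

lemma blockNormSum_mkOmega (Θ : Matrix (Fin p) (Fin p) ℝ)
    (Γ : Fin K → Matrix (Fin p × Fin M) (Fin p × Fin M) ℝ) {j l : Fin p} (hθ : 0 ≤ Θ j l) :
    blockNormSum (fun k => mkOmega Θ (Γ k)) j l = Θ j l * blockNormSum Γ j l := by
  simp only [blockNormSum, blk_mkOmega, frobG_smul, abs_of_nonneg hθ, Finset.mul_sum]

end Blocks

section Rescaling

variable {p M K : ℕ}

lemma mkOmega_hadamard_mkOmega {W V : Matrix (Fin p) (Fin p) ℝ} (hWV : ∀ x y, W x y * V x y = 1)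
    (Θ : Matrix (Fin p) (Fin p) ℝ) (G : Matrix (Fin p × Fin M) (Fin p × Fin M) ℝ) :
    mkOmega (W ⊙ Θ) (mkOmega V G) = mkOmega Θ G := by
  ext x y
  simp only [mkOmega, Matrix.hadamard_apply]
  linear_combination Θ x.1 y.1 * G x y * hWV x.1 y.1

lemma Feasible.rescale {Θ : Matrix (Fin p) (Fin p) ℝ}
    {Γ : Fin K → Matrix (Fin p × Fin M) (Fin p × Fin M) ℝ} (hf : Feasible Θ Γ)
    {W V : Matrix (Fin p) (Fin p) ℝ} (hW : W.IsSymm) (hV : V.IsSymm) (hpos : ∀ x y, 0 < W x y)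
    (hWV : ∀ x y, W x y * V x y = 1) :
    Feasible (W ⊙ Θ) (fun k => mkOmega V (Γ k)) := by
  obtain ⟨hsym, hnn, hdiag, hblk, hpd⟩ := hf
  refine ⟨?_, fun x y hxy => ?_, fun x => ?_, fun k x y => ?_, fun k => ?_⟩
  · ext x y
    simp only [Matrix.transpose_apply, Matrix.hadamard_apply, hW.apply, hsym.apply]
  · exact mul_nonneg (hpos x y).le (hnn x y hxy)
  · exact mul_pos (hpos x x) (hdiag x)
  · rw [blk_mkOmega, blk_mkOmega, hblk, hV.apply, Matrix.transpose_smul]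
  · rw [mkOmega_hadamard_mkOmega hWV]
    exact hpd k

lemma pen1_pairWeight_hadamard {j l : Fin p} (hjl : j ≠ l) (c : ℝ) (Θ : Matrix (Fin p) (Fin p) ℝ) :
    pen1 (pairWeight j l c ⊙ Θ) = pen1 Θ + (c - 1) * (Θ j l + Θ l j) :=
  sum_offDiag_pairWeight_mul hjl c fun q => Θ q.1 q.2

lemma pen2_mkOmega_pairWeight {j l : Fin p} (hjl : j ≠ l) {c : ℝ} (hc : 0 < c)
    (Γ : Fin K → Matrix (Fin p × Fin M) (Fin p × Fin M) ℝ) :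
    pen2 (fun k => mkOmega (pairWeight j l c) (Γ k)) =
      pen2 Γ + (c - 1) * (blockNormSum Γ j l + blockNormSum Γ l j) := by
  simp only [pen2_eq_sum_blockNormSum, blockNormSum_mkOmega _ Γ (pairWeight_pos j l hc _ _).le]
  exact sum_offDiag_pairWeight_mul hjl c fun q => blockNormSum Γ q.1 q.2

lemma Q1_pairWeight_rescale (Sig : Fin K → Matrix (Fin p × Fin M) (Fin p × Fin M) ℝ) (l1 l2 : ℝ)
    {Θ : Matrix (Fin p) (Fin p) ℝ} {Γ : Fin K → Matrix (Fin p × Fin M) (Fin p × Fin M) ℝ}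
    (hΘ : Θ.IsSymm) (hΓ : ∀ k j l, blk (Γ k) l j = (blk (Γ k) j l)ᵀ)
    {j l : Fin p} (hjl : j ≠ l) {c : ℝ} (hc : 0 < c) :
    Q1 Sig l1 l2 (pairWeight j l c ⊙ Θ) (fun k => mkOmega (pairWeight j l c⁻¹) (Γ k)) =
      Q1 Sig l1 l2 Θ Γ + ((c - 1) * (2 * (l1 * Θ j l)) +
        (c⁻¹ - 1) * (2 * (l2 * blockNormSum Γ j l))) := by
  have hloss : (fun k => mkOmega (pairWeight j l c ⊙ Θ) (mkOmega (pairWeight j l c⁻¹) (Γ k))) =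
      fun k => mkOmega Θ (Γ k) :=
    funext fun k => mkOmega_hadamard_mkOmega (pairWeight_mul_inv j l hc.ne') Θ (Γ k)
  simp only [Q1, hloss, pen1_pairWeight_hadamard hjl, pen2_mkOmega_pairWeight hjl (inv_pos.2 hc),
    hΘ.apply, blockNormSum_comm hΓ]
  ring

end Rescaling

lemma eq_of_isLocalMin_scaling {A B : ℝ}
    (h : IsLocalMin (fun c : ℝ => (c - 1) * A + (c⁻¹ - 1) * B) 1) : A = B := by
  have hderiv : HasDerivAt (fun c : ℝ => (c - 1) * A + (c⁻¹ - 1) * B) (A - B) 1 := by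
    have h1 := ((hasDerivAt_id (1 : ℝ)).sub_const 1).mul_const A
    have h2 := ((hasDerivAt_inv (one_ne_zero (α := ℝ))).sub_const 1).mul_const B
    exact (h1.add h2).congr_deriv (by norm_num; ring)
  linarith [h.hasDerivAt_eq_zero hderiv]

section LocalMin

open Filter Topology

variable {p M K : ℕ} {Sig : Fin K → Matrix (Fin p × Fin M) (Fin p × Fin M) ℝ} {l1 l2 : ℝ}
  {Θh : Matrix (Fin p) (Fin p) ℝ} {Γh : Fin K → Matrix (Fin p × Fin M) (Fin p × Fin M) ℝ}

lemma IsLocalMinQ1.eventually_le (h : IsLocalMinQ1 Sig l1 l2 Θh Γh) {X : Type*}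
    [TopologicalSpace X] {θ : X → Matrix (Fin p) (Fin p) ℝ}
    {γ : X → Fin K → Matrix (Fin p × Fin M) (Fin p × Fin M) ℝ} {x₀ : X}
    (hθ : ContinuousAt θ x₀) (hγ : ContinuousAt γ x₀) (hθ₀ : θ x₀ = Θh) (hγ₀ : γ x₀ = Γh) :
    ∀ᶠ x in 𝓝 x₀, Feasible (θ x) (γ x) → (∀ j, θ x j j = 1) →
      Q1 Sig l1 l2 Θh Γh ≤ Q1 Sig l1 l2 (θ x) (γ x) := by
  obtain ⟨-, δ, hδ, hmin⟩ := h
  have hdist : Tendsto (fun x => paramDist (θ x) Θh (γ x) Γh) (𝓝 x₀) (𝓝 0) := by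
    have hcont : ContinuousAt (fun x => paramDist (θ x) Θh (γ x) Γh) x₀ := by
      refine (continuous_ell1.continuousAt.comp (hθ.sub continuousAt_const)).add
        (tendsto_finsetSum _ fun k _ => continuous_ell1.continuousAt.comp ?_)
      exact ((continuous_apply k).continuousAt.comp hγ).sub continuousAt_const
    simpa [ContinuousAt, paramDist, hθ₀, hγ₀, ell1_zero] using hcont
  filter_upwards [hdist.eventually (gt_mem_nhds hδ)] with x hx hf hd using hmin _ _ hf hd hx

theorem IsLocalMinQ1.balance (h : IsLocalMinQ1 Sig l1 l2 Θh Γh) {j l : Fin p} (hjl : j ≠ l) :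
    l1 * Θh j l = l2 * blockNormSum Γh j l := by
  obtain ⟨⟨hf, hdiag⟩, -⟩ := id h
  have hθ : ContinuousAt (fun c => pairWeight j l c ⊙ Θh) 1 :=
    (continuous_matrix fun x y =>
      ((continuous_pairWeight j l).matrix_elem x y).mul continuous_const).continuousAt
  have hγ : ContinuousAt (fun c k => mkOmega (pairWeight j l c⁻¹) (Γh k)) 1 :=
    continuousAt_pi.2 fun k => (continuous_mkOmega_left (Γh k)).continuousAt.comp
      ((continuous_pairWeight j l).continuousAt.comp (continuousAt_inv₀ one_ne_zero))
  have hnear := h.eventually_le hθ hγ (by ext; simp [pairWeight_one])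
    (by ext; simp [mkOmega, pairWeight_one])
  have hmin : IsLocalMin (fun c : ℝ => (c - 1) * (2 * (l1 * Θh j l)) +
      (c⁻¹ - 1) * (2 * (l2 * blockNormSum Γh j l))) 1 := by
    filter_upwards [hnear, lt_mem_nhds one_pos] with c hc hc0
    have hle := hc (hf.rescale (pairWeight_isSymm j l c) (pairWeight_isSymm j l c⁻¹)
      (pairWeight_pos j l hc0) (pairWeight_mul_inv j l hc0.ne'))
      (fun x => by simp [pairWeight_self hjl, hdiag])
    rw [Q1_pairWeight_rescale Sig l1 l2 hf.1 hf.2.2.2.1 hjl hc0] at hle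
    norm_num
    linarith
  linarith [eq_of_isLocalMin_scaling hmin]

end LocalMin

lemma div_sqrt_mul {a : ℝ} (ha : 0 < a) (s : ℝ) : s / √(a * s) = √(s / a) := by
  rw [Real.sqrt_mul ha.le, ← div_div, div_right_comm, Real.div_sqrt, Real.sqrt_div' _ ha.le]

lemma mul_sqrt_add_mul_div_sqrt {l1 l2 : ℝ} (hl1 : 0 < l1) (hl2 : 0 < l2) (s : ℝ) :
    l1 * √(l2 / l1 * s) + l2 * (s / √(l2 / l1 * s)) = 2 * √(l1 * l2) * √s := by
  rw [div_sqrt_mul (div_pos hl2 hl1) s]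
  have h1 : l1 * √(l2 / l1 * s) = √(l1 * l2) * √s := by
    rw [← Real.sqrt_mul (by positivity), show l1 * l2 * s = l1 ^ 2 * (l2 / l1 * s) by field_simp,
      Real.sqrt_mul (sq_nonneg _), Real.sqrt_sq hl1.le]
  have h2 : l2 * √(s / (l2 / l1)) = √(l1 * l2) * √s := by
    rw [← Real.sqrt_mul (by positivity), show l1 * l2 * s = l2 ^ 2 * (s / (l2 / l1)) by field_simp,
      Real.sqrt_mul (sq_nonneg _), Real.sqrt_sq hl2.le]
  rw [h1, h2]
  ring

section Reparametrization

variable {p M K : ℕ} {l1 l2 : ℝ}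

def thetaOf (l1 l2 : ℝ) (Ω : Fin K → Matrix (Fin p × Fin M) (Fin p × Fin M) ℝ) :
    Matrix (Fin p) (Fin p) ℝ :=
  fun j l => if j = l then 1 else √(l2 / l1 * blockNormSum Ω j l)

-- Where `thetaOf` vanishes the blocks of `Ω` vanish too, and `x / 0 = 0` sets `gammaOf` to `0`.
def gammaOf (l1 l2 : ℝ) (Ω : Fin K → Matrix (Fin p × Fin M) (Fin p × Fin M) ℝ) :
    Fin K → Matrix (Fin p × Fin M) (Fin p × Fin M) ℝ :=
  fun k x y => Ω k x y / thetaOf l1 l2 Ω x.1 y.1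

@[simp]
lemma thetaOf_self (Ω : Fin K → Matrix (Fin p × Fin M) (Fin p × Fin M) ℝ) (j : Fin p) :
    thetaOf l1 l2 Ω j j = 1 :=
  if_pos rfl

lemma thetaOf_of_ne (Ω : Fin K → Matrix (Fin p × Fin M) (Fin p × Fin M) ℝ) {j l : Fin p}
    (hjl : j ≠ l) : thetaOf l1 l2 Ω j l = √(l2 / l1 * blockNormSum Ω j l) :=
  if_neg hjl

lemma thetaOf_nonneg (Ω : Fin K → Matrix (Fin p × Fin M) (Fin p × Fin M) ℝ) (j l : Fin p) :
    0 ≤ thetaOf l1 l2 Ω j l := by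
  unfold thetaOf
  split
  · exact zero_le_one
  · exact Real.sqrt_nonneg _

lemma blockNormSum_eq_zero_of_thetaOf_eq_zero (hl1 : 0 < l1) (hl2 : 0 < l2)
    {Ω : Fin K → Matrix (Fin p × Fin M) (Fin p × Fin M) ℝ} {j l : Fin p}
    (h : thetaOf l1 l2 Ω j l = 0) : blockNormSum Ω j l = 0 := by
  have hjl : j ≠ l := by
    rintro rfl
    simp at h
  rw [thetaOf_of_ne Ω hjl, Real.sqrt_eq_zero (mul_nonneg (div_pos hl2 hl1).le
    (blockNormSum_nonneg Ω j l))] at h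
  exact (mul_eq_zero.1 h).resolve_left (div_pos hl2 hl1).ne'

lemma mkOmega_thetaOf_gammaOf (hl1 : 0 < l1) (hl2 : 0 < l2)
    (Ω : Fin K → Matrix (Fin p × Fin M) (Fin p × Fin M) ℝ) (k : Fin K) :
    mkOmega (thetaOf l1 l2 Ω) (gammaOf l1 l2 Ω k) = Ω k := by
  ext x y
  simp only [mkOmega, gammaOf]
  by_cases h : thetaOf l1 l2 Ω x.1 y.1 = 0
  · rw [h, zero_mul, eq_comm, ← abs_nonpos_iff,
      ← blockNormSum_eq_zero_of_thetaOf_eq_zero hl1 hl2 h]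
    exact abs_le_blockNormSum Ω k x y
  · exact mul_div_cancel₀ _ h

lemma feasible_thetaOf_gammaOf (hl1 : 0 < l1) (hl2 : 0 < l2)
    {Ω : Fin K → Matrix (Fin p × Fin M) (Fin p × Fin M) ℝ} (hΩ : ∀ k, (Ω k).PosDef) :
    Feasible (thetaOf l1 l2 Ω) (gammaOf l1 l2 Ω) := by
  have hsymm : ∀ k x y, Ω k y x = Ω k x y := fun k x y => by
    simpa using (hΩ k).isHermitian.apply x y
  have hblk : ∀ k j l, blk (Ω k) l j = (blk (Ω k) j l)ᵀ :=
    fun k => blk_swap_of_isHermitian (hΩ k).isHermitian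
  have hθ : (thetaOf l1 l2 Ω).IsSymm := by
    ext j l
    by_cases hjl : j = l
    · subst hjl; rfl
    · simp only [Matrix.transpose_apply, thetaOf_of_ne Ω hjl, thetaOf_of_ne Ω (Ne.symm hjl),
        blockNormSum_comm hblk]
  refine ⟨hθ, fun j l _ => thetaOf_nonneg Ω j l, fun j => by simp, fun k j l => ?_,
    fun k => (mkOmega_thetaOf_gammaOf hl1 hl2 Ω k).symm ▸ hΩ k⟩
  ext a b
  simp only [blk, gammaOf, Matrix.transpose_apply, hθ.apply, hsymm k (l, a)]

lemma blockNormSum_gammaOf (Ω : Fin K → Matrix (Fin p × Fin M) (Fin p × Fin M) ℝ) (j l : Fin p) :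
    blockNormSum (gammaOf l1 l2 Ω) j l = blockNormSum Ω j l / thetaOf l1 l2 Ω j l := by
  have hblk : ∀ k, blk (gammaOf l1 l2 Ω k) j l = (thetaOf l1 l2 Ω j l)⁻¹ • blk (Ω k) j l := by
    intro k
    ext a b
    simp [blk, gammaOf, div_eq_inv_mul]
  simp only [blockNormSum, hblk, frobG_smul, abs_inv, abs_of_nonneg (thetaOf_nonneg Ω j l),
    inv_mul_eq_div, ← Finset.sum_div]

theorem Q1_thetaOf_gammaOf (hl1 : 0 < l1) (hl2 : 0 < l2)
    (Sig : Fin K → Matrix (Fin p × Fin M) (Fin p × Fin M) ℝ)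
    (Ω : Fin K → Matrix (Fin p × Fin M) (Fin p × Fin M) ℝ) :
    Q1 Sig l1 l2 (thetaOf l1 l2 Ω) (gammaOf l1 l2 Ω) = Q3 Sig (2 * √(l1 * l2)) Ω := by
  have hpen : l1 * pen1 (thetaOf l1 l2 Ω) + l2 * pen2 (gammaOf l1 l2 Ω) =
      2 * √(l1 * l2) * ∑ q ∈ Finset.univ.offDiag, √(blockNormSum Ω q.1 q.2) := by
    simp only [pen1, pen2_eq_sum_blockNormSum, Finset.mul_sum, ← Finset.sum_add_distrib]
    refine Finset.sum_congr rfl fun q hq => ?_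
    have hne : q.1 ≠ q.2 := (Finset.mem_offDiag.1 hq).2.2
    rw [blockNormSum_gammaOf, thetaOf_of_ne Ω hne, mul_sqrt_add_mul_div_sqrt hl1 hl2]
  have hΩ : (fun k => mkOmega (thetaOf l1 l2 Ω) (gammaOf l1 l2 Ω k)) = Ω :=
    funext (mkOmega_thetaOf_gammaOf hl1 hl2 Ω)
  rw [Q1, Q3, hΩ, add_assoc, hpen]
  rfl

end Reparametrization

section Continuity

open Filter Topology

variable {p M K : ℕ} {l1 l2 : ℝ}

lemma continuous_thetaOf :
    Continuous (thetaOf l1 l2 : (Fin K → Matrix (Fin p × Fin M) (Fin p × Fin M) ℝ) →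
      Matrix (Fin p) (Fin p) ℝ) := by
  refine continuous_matrix fun j l => ?_
  unfold thetaOf
  split
  · exact continuous_const
  · exact (continuous_const.mul (continuous_blockNormSum j l)).sqrt

lemma abs_gammaOf_le (hl1 : 0 < l1) (hl2 : 0 < l2)
    (Ω : Fin K → Matrix (Fin p × Fin M) (Fin p × Fin M) ℝ) (k : Fin K) {x y : Fin p × Fin M}
    (hxy : x.1 ≠ y.1) : |gammaOf l1 l2 Ω k x y| ≤ √(blockNormSum Ω x.1 y.1 / (l2 / l1)) := by
  rw [gammaOf, abs_div, abs_of_nonneg (thetaOf_nonneg Ω _ _), thetaOf_of_ne Ω hxy,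
    ← div_sqrt_mul (div_pos hl2 hl1)]
  exact div_le_div_of_nonneg_right (abs_le_blockNormSum Ω k x y) (Real.sqrt_nonneg _)

lemma continuous_gammaOf (hl1 : 0 < l1) (hl2 : 0 < l2) :
    Continuous (gammaOf l1 l2 : (Fin K → Matrix (Fin p × Fin M) (Fin p × Fin M) ℝ) →
      Fin K → Matrix (Fin p × Fin M) (Fin p × Fin M) ℝ) := by
  refine continuous_pi fun k => continuous_matrix fun x y =>
    continuous_iff_continuousAt.2 fun Ω₀ => ?_
  by_cases h0 : thetaOf l1 l2 Ω₀ x.1 y.1 = 0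
  · have hxy : x.1 ≠ y.1 := fun hxy => by simp [hxy] at h0
    have hbound : Tendsto (fun Ω => √(blockNormSum Ω x.1 y.1 / (l2 / l1))) (𝓝 Ω₀) (𝓝 0) := by
      have := (((continuous_blockNormSum x.1 y.1).div_const (l2 / l1)).sqrt).tendsto Ω₀
      simpa [blockNormSum_eq_zero_of_thetaOf_eq_zero hl1 hl2 h0] using this
    have hval : gammaOf l1 l2 Ω₀ k x y = 0 := by simp [gammaOf, h0]
    rw [ContinuousAt, hval]
    exact squeeze_zero_norm (fun Ω => abs_gammaOf_le hl1 hl2 Ω k hxy) hbound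
  · exact (((continuous_apply k).matrix_elem x y).continuousAt).div
      ((continuous_thetaOf.matrix_elem x.1 y.1).continuousAt) h0

end Continuity

section AtLocalMin

variable {p M K : ℕ} {Sig : Fin K → Matrix (Fin p × Fin M) (Fin p × Fin M) ℝ} {l1 l2 : ℝ}
  {Θh : Matrix (Fin p) (Fin p) ℝ} {Γh : Fin K → Matrix (Fin p × Fin M) (Fin p × Fin M) ℝ}

lemma IsLocalMinQ1.thetaOf_eq (h : IsLocalMinQ1 Sig l1 l2 Θh Γh) (hl1 : 0 < l1) :
    thetaOf l1 l2 (fun k => mkOmega Θh (Γh k)) = Θh := by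
  obtain ⟨⟨hf, hdiag⟩, -⟩ := id h
  ext j l
  by_cases hjl : j = l
  · subst hjl
    simp [hdiag]
  · have hθ := hf.2.1 j l hjl
    have hsq : l2 / l1 * (Θh j l * blockNormSum Γh j l) = Θh j l ^ 2 := by
      rw [div_mul_eq_mul_div, div_eq_iff hl1.ne']
      linear_combination -Θh j l * h.balance hjl
    rw [thetaOf_of_ne _ hjl, blockNormSum_mkOmega _ _ hθ, hsq, Real.sqrt_sq hθ]

lemma IsLocalMinQ1.gammaOf_eq (h : IsLocalMinQ1 Sig l1 l2 Θh Γh) (hl1 : 0 < l1) (hl2 : 0 < l2) :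
    gammaOf l1 l2 (fun k => mkOmega Θh (Γh k)) = Γh := by
  obtain ⟨⟨-, hdiag⟩, -⟩ := id h
  ext k x y
  simp only [gammaOf, h.thetaOf_eq hl1, mkOmega]
  by_cases h0 : Θh x.1 y.1 = 0
  · have hxy : x.1 ≠ y.1 := fun hxy => by simp [hxy, hdiag] at h0
    have hg : blockNormSum Γh x.1 y.1 = 0 := by
      have := h.balance hxy
      rw [h0, mul_zero, eq_comm] at this
      exact (mul_eq_zero.1 this).resolve_left hl2.ne'
    rw [h0, div_zero, eq_comm, ← abs_nonpos_iff, ← hg]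
    exact abs_le_blockNormSum Γh k x y
  · exact mul_div_cancel_left₀ _ h0

end AtLocalMin

theorem statement_0_general {p M K : ℕ}
    (l1 l2 : ℝ) (hl1 : 0 < l1) (hl2 : 0 < l2)
    (Sig : Fin K → Matrix (Fin p × Fin M) (Fin p × Fin M) ℝ)
    (Θh : Matrix (Fin p) (Fin p) ℝ)
    (Γh : Fin K → Matrix (Fin p × Fin M) (Fin p × Fin M) ℝ)
    (h : IsLocalMinQ1 Sig l1 l2 Θh Γh) :
    ∃ Ωh : Fin K → Matrix (Fin p × Fin M) (Fin p × Fin M) ℝ,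
      IsLocalMinQ3 Sig (2 * Real.sqrt (l1 * l2)) Ωh ∧
        ∀ k, Ωh k = mkOmega Θh (Γh k) := by
  obtain ⟨⟨hf, -⟩, -⟩ := id h
  refine ⟨fun k => mkOmega Θh (Γh k), ⟨hf.2.2.2.2, ?_⟩, fun k => rfl⟩
  have hθ := h.thetaOf_eq hl1
  have hγ := h.gammaOf_eq hl1 hl2
  obtain ⟨δ, hδ, hnear⟩ := exists_sum_ell1_lt_of_eventually (h.eventually_le
    continuous_thetaOf.continuousAt (continuous_gammaOf hl1 hl2).continuousAt hθ hγ)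
  refine ⟨δ, hδ, fun Ω hΩ hdist => ?_⟩
  calc Q3 Sig (2 * √(l1 * l2)) (fun k => mkOmega Θh (Γh k))
      = Q1 Sig l1 l2 Θh Γh := by rw [← Q1_thetaOf_gammaOf hl1 hl2, hθ, hγ]
    _ ≤ Q1 Sig l1 l2 (thetaOf l1 l2 Ω) (gammaOf l1 l2 Ω) :=
        hnear Ω hdist (feasible_thetaOf_gammaOf hl1 hl2 hΩ) (thetaOf_self Ω)
    _ = Q3 Sig (2 * √(l1 * l2)) Ω := Q1_thetaOf_gammaOf hl1 hl2 Sig Ω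

/-- Theorem 2, first direction. If `(Θ̂, Γ̂)` is a local minimizer of
`Q₁(λ₁, λ₂, ·, ·)`, then there is a local minimizer `Ω̂` of `Q₃(2√(λ₁λ₂), ·)` with
`Ω̂^{(k)}_{jl} = θ̂_{jl} Γ̂^{(k)}_{jl}` for all `j, l, k`. -/
theorem statement_0 {p M K : ℕ} (hp : 2 ≤ p) (hM : 1 ≤ M) (hK : 1 ≤ K)
    (l1 l2 : ℝ) (hl1 : 0 < l1) (hl2 : 0 < l2)
    (Sig : Fin K → Matrix (Fin p × Fin M) (Fin p × Fin M) ℝ)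
    (hSig : ∀ k, (Sig k).IsSymm)
    (Θh : Matrix (Fin p) (Fin p) ℝ)
    (Γh : Fin K → Matrix (Fin p × Fin M) (Fin p × Fin M) ℝ)
    (h : IsLocalMinQ1 Sig l1 l2 Θh Γh) :
    ∃ Ωh : Fin K → Matrix (Fin p × Fin M) (Fin p × Fin M) ℝ,
      IsLocalMinQ3 Sig (2 * Real.sqrt (l1 * l2)) Ωh ∧
        ∀ k, Ωh k = mkOmega Θh (Γh k) :=
  statement_0_general l1 l2 hl1 hl2 Sig Θh Γh h

end JF
end
end

section
/- Let n ≥ 1, let S ∈ ℝ^{n×n} have diagonal entries s_ii > 0 for all i, and let Ω ∈ ℝ^{n×n} be symmetric positive definite with diagonal entries ω_ii. Then Σ_{i=1}^n s_ii ω_ii − log det Ω ≥ n (1 + log min_{1≤i≤n} s_ii). In particular, the function Ω ↦ tr(SΩ) − log det Ω is bounded below on any set of symmetric positive definite matrices whose off-diagonal contribution to tr(SΩ) is bounded. -/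
/-!
Let `m = min_i s_ii > 0`. Since `ω_ii > 0`, `Σ_i s_ii ω_ii ≥ m tr Ω = Σ_k m λ_k` over the
eigenvalues `λ_k > 0` of `Ω`, while `log det Ω = Σ_k log λ_k`. Each term then satisfies
`m λ - log λ ≥ 1 + log m`, which is `log (m λ) ≤ m λ - 1`.
-/

open scoped BigOperators
open Matrix

noncomputable section

theorem Real.one_add_log_le_mul_sub_log {m x : ℝ} (hm : 0 < m) (hx : 0 < x) :
    1 + Real.log m ≤ m * x - Real.log x := by
  have := Real.log_le_sub_one_of_pos (mul_pos hm hx)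
  rw [Real.log_mul hm.ne' hx.ne'] at this
  linarith

namespace Matrix.PosDef

variable {ι : Type*} [Fintype ι] {A : Matrix ι ι ℝ}

theorem card_mul_one_add_log_le_mul_trace_sub_log_det [DecidableEq ι] (hA : A.PosDef)
    {m : ℝ} (hm : 0 < m) :
    Fintype.card ι * (1 + Real.log m) ≤ m * A.trace - Real.log A.det := by
  have hev := hA.eigenvalues_pos
  have hlog_det : Real.log A.det = ∑ i, Real.log (hA.isHermitian.eigenvalues i) := by
    simp only [hA.isHermitian.det_eq_prod_eigenvalues, RCLike.ofReal_real_eq_id, id]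
    exact Real.log_prod fun i _ => (hev i).ne'
  simp only [hA.isHermitian.trace_eq_sum_eigenvalues, RCLike.ofReal_real_eq_id, id]
  rw [hlog_det, Finset.mul_sum, ← Finset.sum_sub_distrib, ← nsmul_eq_mul, ← Finset.card_univ,
    ← Finset.sum_const]
  exact Finset.sum_le_sum fun i _ => Real.one_add_log_le_mul_sub_log hm (hev i)

theorem mul_trace_le_sum_mul_diag (hA : A.PosDef) {m : ℝ} {S : Matrix ι ι ℝ}
    (hmS : ∀ i, m ≤ S i i) :
    m * A.trace ≤ ∑ i, S i i * A i i := by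
  rw [trace, Finset.mul_sum]
  exact Finset.sum_le_sum fun i _ => mul_le_mul_of_nonneg_right (hmS i) (hA.diag_pos).le

end Matrix.PosDef

namespace JF

/-- lower bound via Hadamard's inequality:
`Σ_i s_ii ω_ii − log det Ω ≥ n (1 + log min_i s_ii)` for `S` with positive diagonal
and `Ω` symmetric positive definite. -/
theorem statement_14 {n : ℕ} (hn : 1 ≤ n)
    (S : Matrix (Fin n) (Fin n) ℝ) (hS : ∀ i, 0 < S i i)
    (Ω : Matrix (Fin n) (Fin n) ℝ) (hΩ : Ω.PosDef) :
    (n : ℝ) * (1 + Real.log (⨅ i, S i i)) ≤ ∑ i, S i i * Ω i i - Real.log Ω.det := by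
  have : Nonempty (Fin n) := Fin.pos_iff_nonempty.mp hn
  obtain ⟨i₀, hi₀⟩ := exists_eq_ciInf_of_finite (f := fun i => S i i)
  have hmin_pos : 0 < ⨅ i, S i i := hi₀ ▸ hS i₀
  have hmin_le : ∀ i, ⨅ j, S j j ≤ S i i := ciInf_le (Finite.bddBelow_range _)
  calc (n : ℝ) * (1 + Real.log (⨅ i, S i i))
      ≤ (⨅ i, S i i) * Ω.trace - Real.log Ω.det := by
        simpa using hΩ.card_mul_one_add_log_le_mul_trace_sub_log_det hmin_pos
    _ ≤ ∑ i, S i i * Ω i i - Real.log Ω.det := by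
        gcongr
        exact hΩ.mul_trace_le_sum_mul_diag hmin_le
end JF
end
end
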